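/- Define s_{0,2k}(x) := (−1)^k ∫₀¹ sin(x·u)·T_{2k}(u)/√(1−u²) du. Then for every natural number n and every real x, Σ_{k=0}^{n} (−1)^k s_{0,2k}(x) = (π/4)·H₀(x) + (1/2)·∫₀¹ sin(x·t)·U_{2n}(t)/√(1−t²) dt, where H₀ is the Struve function of order zero and U_{2n} the Chebyshev polynomial of the second kind. -/

import Mathlib

open Polynomial

/-- Struve function of order zero. -/
noncomputable def struveH0 (z : ℝ) : ℝ :=
  ∑' k : ℕ, (-1 : ℝ) ^ k * (z / 2) ^ (2 * k + 1) / (Real.Gamma ((k : ℝ) + 3 / 2)) ^ 2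

/-- `s_{0,2k}(x)` as the integral `(-1)^k ∫₀¹ sin(xu) T_{2k}(u)/√(1-u²) du`. -/
noncomputable def s0 (k : ℕ) (x : ℝ) : ℝ :=
  (-1 : ℝ) ^ k * ∫ u in (0:ℝ)..1,
    Real.sin (x * u) * (Polynomial.Chebyshev.T ℝ (2 * k)).eval u / Real.sqrt (1 - u ^ 2)

/-!
Substituting `u = cos θ` turns each integral against `du / √(1 - u²)` into an integral over
`[0, π/2]`, and the sign in `s0` cancels against `(-1)^k`. The Chebyshev identity
`2 ∑_{k ≤ n} T_{2k} = 1 + U_{2n}` then splits the sum into `½ ∫₀^{π/2} sin (x cos θ) dθ` and the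
`U_{2n}` term. Integrating the sine series termwise, the first integral is `(π/2) H₀(x)`, because
`∫₀^{π/2} cos^{2m+1} θ dθ / (2m+1)! = (π/2) 2^{-(2m+1)} / Γ(m + 3/2)²`.
-/

open MeasureTheory Real Set Nat

namespace Polynomial.Chebyshev

theorem two_mul_sum_range_T_two_mul (R : Type*) [CommRing R] (n : ℕ) :
    2 * ∑ k ∈ Finset.range (n + 1), T R (2 * k) = 1 + U R (2 * n) := by
  induction n with
  | zero => simp [one_add_one_eq_two]
  | succ n ih =>
    rw [Finset.sum_range_succ, mul_add, ih, Nat.cast_succ,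
      show 2 * ((n : ℤ) + 1) = 2 * n + 2 by ring, U_eq_two_mul_T_add_U]
    ring

end Polynomial.Chebyshev

theorem image_cos_Ioo_zero_pi_div_two : cos '' Ioo 0 (π / 2) = Ioo 0 1 := by
  ext y
  constructor
  · rintro ⟨θ, hθ, rfl⟩
    refine ⟨cos_pos_of_mem_Ioo ⟨by linarith [hθ.1, pi_pos], hθ.2⟩, ?_⟩
    simpa using strictAntiOn_cos ⟨le_rfl, pi_pos.le⟩ ⟨hθ.1.le, by linarith [pi_pos, hθ.2]⟩ hθ.1
  · intro hy
    exact ⟨arccos y, ⟨arccos_pos.2 hy.2, arccos_lt_pi_div_two.2 hy.1⟩,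
      cos_arccos (by linarith [hy.1]) hy.2.le⟩

/-- Change of variables needs no integrability: both sides are `0` unless both integrands are
integrable. -/
theorem integral_div_sqrt_one_sub_sq_eq_integral_cos (g : ℝ → ℝ) :
    ∫ u in (0:ℝ)..1, g u / √(1 - u ^ 2) = ∫ θ in (0:ℝ)..(π / 2), g (cos θ) := by
  rw [intervalIntegral.integral_of_le zero_le_one,
    intervalIntegral.integral_of_le (by positivity), integral_Ioc_eq_integral_Ioo,
    integral_Ioc_eq_integral_Ioo, ← image_cos_Ioo_zero_pi_div_two,
    integral_image_eq_integral_abs_deriv_smul measurableSet_Ioo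
      (fun θ _ => (hasDerivAt_cos θ).hasDerivWithinAt)
      (injOn_cos.mono (Ioo_subset_Icc_self.trans (Icc_subset_Icc_right (by linarith [pi_pos]))))]
  refine setIntegral_congr_fun measurableSet_Ioo fun θ hθ => ?_
  have hsin : 0 < sin θ := sin_pos_of_pos_of_lt_pi hθ.1 (by linarith [hθ.2, pi_pos])
  have hsqrt : √(1 - cos θ ^ 2) = sin θ := by
    rw [← sin_sq, sqrt_sq hsin.le]
  simp only [smul_eq_mul, abs_neg, abs_of_pos hsin, hsqrt]
  field_simp

/-- Both sides equal `1` at `m = 0` and get multiplied by `1 / (2 * m + 3) ^ 2` from `m` to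
`m + 1`, by the reduction formula for `∫ cos ^ n` and `Γ(s + 1) = s Γ(s)`. -/
theorem integral_cos_pow_odd_div_factorial (m : ℕ) :
    (∫ θ in (0:ℝ)..(π / 2), cos θ ^ (2 * m + 1)) / (2 * m + 1)!
      = π / 2 * (1 / 2) ^ (2 * m + 1) / Gamma (m + 3 / 2) ^ 2 := by
  induction m with
  | zero =>
    rw [show ((0 : ℕ) : ℝ) + 3 / 2 = 1 / 2 + 1 by norm_num, Gamma_add_one (by norm_num),
      Gamma_one_half_eq]
    rw [mul_pow, sq_sqrt pi_pos.le]
    norm_num [integral_cos]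
    field_simp [pi_ne_zero]
    norm_num
  | succ m ih =>
    have hΓ : ((m + 1 : ℕ) : ℝ) + 3 / 2 = (m + 3 / 2) + 1 := by push_cast; ring
    rw [show 2 * (m + 1) + 1 = 2 * m + 1 + 2 by ring, integral_cos_pow, cos_pi_div_two,
      sin_zero, hΓ, Gamma_add_one (by positivity), Nat.factorial_succ, Nat.factorial_succ]
    have hΓpos : 0 < Gamma (m + 3 / 2) := Gamma_pos_of_pos (by positivity)
    rw [div_eq_iff (by positivity)] at ih
    rw [ih]
    push_cast
    field_simp
    ring

theorem integral_sin_mul_cos_eq_struveH0 (x : ℝ) :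
    ∫ θ in (0:ℝ)..(π / 2), sin (x * cos θ) = π / 2 * struveH0 x := by
  have hseries : HasSum
      (fun m : ℕ => ∫ θ in (0:ℝ)..(π / 2), (-1) ^ m * (x * cos θ) ^ (2 * m + 1) / (2 * m + 1)!)
      (∫ θ in (0:ℝ)..(π / 2), sin (x * cos θ)) := by
    refine intervalIntegral.hasSum_integral_of_dominated_convergence
      (fun m _ => |x| ^ (2 * m + 1) / (2 * m + 1)!)
      (fun m => (by fun_prop : Continuous _).aestronglyMeasurable) (fun m => ?_) ?_
      intervalIntegrable_const (ae_of_all _ fun θ _ => hasSum_sin _)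
    · refine ae_of_all _ fun θ _ => ?_
      rw [norm_div, norm_mul, norm_pow, norm_neg, norm_one, one_pow, one_mul, norm_pow,
        Real.norm_eq_abs, abs_mul, Real.norm_natCast]
      gcongr
      exact mul_le_of_le_one_right (abs_nonneg x) (abs_cos_le_one θ)
    · refine ae_of_all _ fun _ _ => (Real.summable_pow_div_factorial |x|).comp_injective ?_
      intro a b h
      simp only at h
      omega
  rw [← hseries.tsum_eq, struveH0, ← tsum_mul_left]
  refine tsum_congr fun m => ?_
  calc ∫ θ in (0:ℝ)..(π / 2), (-1) ^ m * (x * cos θ) ^ (2 * m + 1) / (2 * m + 1)!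
      = (-1) ^ m * x ^ (2 * m + 1) *
          ((∫ θ in (0:ℝ)..(π / 2), cos θ ^ (2 * m + 1)) / (2 * m + 1)!) := by
        rw [← intervalIntegral.integral_div, ← intervalIntegral.integral_const_mul]
        congr 1
        ext θ
        ring
    _ = π / 2 * ((-1) ^ m * (x / 2) ^ (2 * m + 1) / Gamma (m + 3 / 2) ^ 2) := by
        rw [integral_cos_pow_odd_div_factorial]
        ring

theorem neg_one_pow_mul_s0 (k : ℕ) (x : ℝ) :
    (-1) ^ k * s0 k x
      = ∫ θ in (0:ℝ)..(π / 2), sin (x * cos θ) * (Chebyshev.T ℝ (2 * k)).eval (cos θ) := by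
  rw [s0, ← mul_assoc, ← mul_pow, neg_one_mul, neg_neg, one_pow, one_mul]
  exact integral_div_sqrt_one_sub_sq_eq_integral_cos _

theorem stmt13 (n : ℕ) (x : ℝ) :
    ∑ k ∈ Finset.range (n + 1), (-1 : ℝ) ^ k * s0 k x
      = Real.pi / 4 * struveH0 x + (1 / 2) *
        ∫ t in (0:ℝ)..1,
          Real.sin (x * t) * (Polynomial.Chebyshev.U ℝ (2 * n)).eval t /
            Real.sqrt (1 - t ^ 2) := by
  have hintegrable (p : ℝ[X]) :
      IntervalIntegrable (fun θ => sin (x * cos θ) * p.eval (cos θ)) volume 0 (π / 2) :=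
    (by fun_prop : Continuous _).intervalIntegrable _ _
  have hchebyshev (θ : ℝ) :
      ∑ k ∈ Finset.range (n + 1), sin (x * cos θ) * (Chebyshev.T ℝ (2 * k)).eval (cos θ)
        = 1 / 2 * sin (x * cos θ)
          + 1 / 2 * (sin (x * cos θ) * (Chebyshev.U ℝ (2 * n)).eval (cos θ)) := by
    have h := congrArg (eval (cos θ)) (Chebyshev.two_mul_sum_range_T_two_mul ℝ n)
    simp only [eval_mul, eval_add, eval_one, eval_ofNat, eval_finsetSum] at h
    rw [← Finset.mul_sum]
    linear_combination sin (x * cos θ) / 2 * h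
  simp only [neg_one_pow_mul_s0]
  rw [← intervalIntegral.integral_finsetSum fun k _ => hintegrable _,
    intervalIntegral.integral_congr fun θ _ => hchebyshev θ, intervalIntegral.integral_add,
    intervalIntegral.integral_const_mul, intervalIntegral.integral_const_mul,
    integral_sin_mul_cos_eq_struveH0, integral_div_sqrt_one_sub_sq_eq_integral_cos]
  · ring
  · exact (by fun_prop : Continuous _).intervalIntegrable _ _
  · exact (hintegrable _).const_mul _
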